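/- If A, B are positive reals satisfying 2A² + 8AB² + (2A + B²)² = 1/2 and A(6AB + B³)² = (3A² + 3AB² − 1/4)², then A = 140^{-1/2} and B = 2 · 140^{-1/4}. -/

import Mathlib

/-! The second equation, minus a suitable multiple of the first, factors as
`B² (6A + B²)² (A - B²/4) = 0`, so positivity forces `A = (B/2)²`. The first equation then
becomes `(B/2)⁴ = 1/140`, and both constants are positive roots of `1/140`. -/

lemma eq_rpow_neg_one_div_of_pow_eq_inv {x y : ℝ} {n : ℕ} (hn : n ≠ 0) (hy : 0 ≤ y)
    (h : y ^ n = x⁻¹) : y = x ^ (-(1:ℝ) / n) := by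
  have hx : 0 ≤ x := inv_nonneg.mp (h ▸ pow_nonneg hy n)
  rw [neg_div, Real.rpow_neg hx, ← Real.inv_rpow hx, ← h, one_div,
    Real.pow_rpow_inv_natCast hy hn]

lemma eq_half_sq_of_recurrence_constants {A B : ℝ} (hA : 0 < A) (hB : 0 < B)
    (h1 : 2 * A ^ 2 + 8 * A * B ^ 2 + (2 * A + B ^ 2) ^ 2 = 1 / 2)
    (h2 : A * (6 * A * B + B ^ 3) ^ 2 = (3 * A ^ 2 + 3 * A * B ^ 2 - 1 / 4) ^ 2) :
    A = (B / 2) ^ 2 := by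
  have hfac : B ^ 2 * (6 * A + B ^ 2) ^ 2 * (A - B ^ 2 / 4) = 0 := by
    linear_combination
      h2 + ((3 * A ^ 2 + 3 * A * B ^ 2 - 1 / 4 - B ^ 2 * (6 * A + B ^ 2) / 2) / 2) * h1
  have hne : B ^ 2 * (6 * A + B ^ 2) ^ 2 ≠ 0 := by positivity
  linear_combination (mul_eq_zero.mp hfac).resolve_left hne

/-- the algebraic system determining the asymptotic constants
`A = 140^{-1/2}`, `B = 2 · 140^{-1/4}`. -/
theorem asymptotic_constants (A B : ℝ) (hA : 0 < A) (hB : 0 < B)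
    (h1 : 2 * A ^ 2 + 8 * A * B ^ 2 + (2 * A + B ^ 2) ^ 2 = 1 / 2)
    (h2 : A * (6 * A * B + B ^ 3) ^ 2 = (3 * A ^ 2 + 3 * A * B ^ 2 - 1 / 4) ^ 2) :
    A = (140:ℝ) ^ (-(1:ℝ) / 2) ∧ B = 2 * (140:ℝ) ^ (-(1:ℝ) / 4) := by
  have hAB := eq_half_sq_of_recurrence_constants hA hB h1 h2
  have hB4 : (B / 2) ^ 4 = (140:ℝ)⁻¹ := by
    rw [hAB] at h1
    linear_combination (1 / 70) * h1
  have hA2 : A ^ 2 = (140:ℝ)⁻¹ := by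
    rw [hAB]
    linear_combination hB4
  constructor
  · exact_mod_cast eq_rpow_neg_one_div_of_pow_eq_inv two_ne_zero hA.le hA2
  · have hB2 := eq_rpow_neg_one_div_of_pow_eq_inv four_ne_zero (by positivity) hB4
    norm_num at hB2
    linarith
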